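/- arXiv:2004.09477 — 3 statements merged into one kernel-verified Lean document; each statement's English description precedes it below -/
import Mathlib

section
/- For every fixed t ∈ [0,1/2], the function a ↦ ℓ(t,a) is convex on [0,1], where ℓ(t,a) = 2(1−a)t if a ≥ 1/2; t/(2a) if t ≤ a < 1/2; 1 − a/(2t) if 0 ≤ a < t; and ℓ(0,0)=0. -/
/-!
For `t > 0`, `ell t` is, on `[0, 1]`, the upper envelope of the tangent lines
`x ↦ t/s - t x/(2 s²)`, `t ≤ s ≤ 1/2`, to the hyperbola branch `x ↦ t/(2x)`: each of them lies
below all three pieces of `ell t`, and the one at `s = max t (min x (1/2))` touches `ell t` at `x`.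
A function that has a supporting affine minorant at every point of a convex set is convex on it.
For `t = 0`, `ell 0` vanishes on `[0, ∞)`.
-/

noncomputable def ell (t a : ℝ) : ℝ :=
  if t = 0 ∧ a = 0 then 0
  else if 1/2 ≤ a then 2*(1-a)*t
  else if t ≤ a then t/(2*a)
  else 1 - a/(2*t)

theorem convexOn_of_forall_exists_affineMap_le_eq {𝕜 E β : Type*} [Field 𝕜] [LinearOrder 𝕜]
    [IsStrictOrderedRing 𝕜] [AddCommGroup E] [Module 𝕜 E] [AddCommGroup β] [PartialOrder β]
    [IsOrderedAddMonoid β] [Module 𝕜 β] [PosSMulMono 𝕜 β] {s : Set E} {f : E → β}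
    (hs : Convex 𝕜 s) (h : ∀ x ∈ s, ∃ g : E →ᵃ[𝕜] β, (∀ y ∈ s, g y ≤ f y) ∧ g x = f x) :
    ConvexOn 𝕜 s f := by
  refine ⟨hs, fun x hx y hy a b ha hb hab => ?_⟩
  obtain ⟨g, hg_le, hg_eq⟩ := h _ (hs hx hy ha hb hab)
  calc f (a • x + b • y) = a • g x + b • g y := by rw [← hg_eq, Convex.combo_affine_apply hab]
    _ ≤ a • f x + b • f y := by gcongr <;> exact hg_le _ ‹_›

theorem ell_of_pos {t : ℝ} (ht : 0 < t) (a : ℝ) :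
    ell t a = if 1/2 ≤ a then 2*(1-a)*t else if t ≤ a then t/(2*a) else 1 - a/(2*t) := by
  rw [ell, if_neg (fun h => ht.ne' h.1)]

theorem ell_zero_left {a : ℝ} (ha : 0 ≤ a) : ell 0 a = 0 := by
  unfold ell
  split_ifs <;> first | rfl | simp

noncomputable def ellTangent (t s : ℝ) : ℝ →ᵃ[ℝ] ℝ :=
  AffineMap.const ℝ ℝ (t / s) - (t / (2 * s ^ 2)) • AffineMap.id ℝ ℝ

theorem ellTangent_apply (t s x : ℝ) : ellTangent t s x = t / s - t / (2 * s ^ 2) * x := rfl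

theorem ellTangent_le_ell {t s x : ℝ} (ht : 0 < t) (hts : t ≤ s) (hs : s ≤ 1/2) :
    ellTangent t s x ≤ ell t x := by
  have hs0 : 0 < s := ht.trans_le hts
  have htangent : ellTangent t s x = (2*s - x) * t / (2*s^2) := by
    rw [ellTangent_apply]; field_simp
  rw [ell_of_pos ht, htangent]
  split_ifs with hx₂ hxt
  · -- at `x = 1/2` this is the hyperbola case, and the tangent has slope `-t/(2s²) ≤ -2t`
    rw [div_le_iff₀ (by positivity)]
    have : 0 ≤ (1 - 4*s^2) * (x - 1/2) + 2*(s - 1/2)^2 := by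
      have : 0 ≤ 1 - 4*s^2 := by nlinarith
      positivity
    nlinarith
  · have hx0 : 0 < x := ht.trans_le hxt
    rw [div_le_div_iff₀ (by positivity) (by positivity)]
    nlinarith [sq_nonneg (s - x)]
  · push Not at hx₂ hxt
    rw [show 1 - x/(2*t) = (2*t - x)/(2*t) by field_simp,
      div_le_div_iff₀ (by positivity) (by positivity)]
    have : x * (s + t) ≤ 2*s*t := by nlinarith
    nlinarith [mul_le_mul_of_nonneg_left this (sub_nonneg.2 hts)]

theorem ellTangent_max_min_eq_ell {t x : ℝ} (ht : 0 < t) (ht₂ : t ≤ 1/2) :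
    ellTangent t (max t (min x (1/2))) x = ell t x := by
  rw [ell_of_pos ht, ellTangent_apply]
  split_ifs with hx₂ hxt
  · rw [min_eq_right hx₂, max_eq_right ht₂]
    ring
  · rw [min_eq_left (not_le.1 hx₂).le, max_eq_right hxt]
    have hx0 : 0 < x := ht.trans_le hxt
    field_simp
    ring
  · rw [max_eq_left ((min_le_left _ _).trans (not_le.1 hxt).le)]
    field_simp

theorem ell_convex_in_a (t : ℝ) (ht : t ∈ Set.Icc (0:ℝ) (1/2)) :
    ConvexOn ℝ (Set.Icc (0:ℝ) 1) (fun a => ell t a) := by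
  obtain ⟨ht₀, ht₂⟩ := ht
  rcases ht₀.eq_or_lt with rfl | ht₀
  · exact (convexOn_const 0 (convex_Icc 0 1)).congr fun x hx => (ell_zero_left hx.1).symm
  refine convexOn_of_forall_exists_affineMap_le_eq (convex_Icc 0 1) fun x _ =>
    ⟨ellTangent t (max t (min x (1/2))), fun y _ => ?_, ellTangent_max_min_eq_ell ht₀ ht₂⟩
  exact ellTangent_le_ell ht₀ (le_max_left _ _) (max_le ht₂ (min_le_right _ _))
end

section
/- Let ℓ(t,a) be defined on [0,1/2]×[0,1] by ℓ(t,a) = 2(1−a)t if a ≥ 1/2, t/(2a) if t ≤ a < 1/2, 1 − a/(2t) if a < t, ℓ(0,0) = 0. Fix a ∈ [0,1] and t, t' ∈ [0,1/2], and fix δ > 0 and r > 0 with a + rδ ≤ 1. If |t − t'| ≤ 2δ² + δ√(8t), then ℓ(t', a + rδ) ≤ ℓ(t,a) + δ/r. -/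
set_option maxHeartbeats 1000000

lemma ell_le_div (t' a' : ℝ) (ht0 : 0 ≤ t') (ha0 : 0 < a') :
    ell t' a' ≤ t'/(2*a') := by
  unfold ell
  rw [if_neg (by rintro ⟨_, h⟩; exact ha0.ne' h)]
  split_ifs with h1 h2
  · rw [le_div_iff₀ (by linarith)]
    nlinarith [mul_nonneg ht0 (sq_nonneg (2*a'-1))]
  · exact le_refl _
  · push_neg at h1 h2
    have ht0' : 0 < t' := lt_trans ha0 h2
    have key : 1 ≤ t'/(2*a') + a'/(2*t') := by
      rw [div_add_div _ _ (by positivity) (by positivity), le_div_iff₀ (by positivity)]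
      nlinarith [sq_nonneg (t'-a')]
    linarith

theorem ell_perturbation (a t t' δ r : ℝ) (ha : a ∈ Set.Icc (0:ℝ) 1)
    (ht : t ∈ Set.Icc (0:ℝ) (1/2)) (ht' : t' ∈ Set.Icc (0:ℝ) (1/2))
    (hδ : 0 < δ) (hr : 0 < r) (har : a + r*δ ≤ 1)
    (hclose : |t - t'| ≤ 2*δ^2 + δ*Real.sqrt (8*t)) :
    ell t' (a + r*δ) ≤ ell t a + δ/r := by
  obtain ⟨ha0, ha1⟩ := ha
  obtain ⟨ht0, th⟩ := ht
  obtain ⟨ht'0, t'h⟩ := ht'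
  set s : ℝ := Real.sqrt (8*t) with hs
  have hs0 : 0 ≤ s := Real.sqrt_nonneg _
  have hs2 : s^2 = 8*t := Real.sq_sqrt (by linarith)
  have hrδ : 0 < r*δ := mul_pos hr hδ
  have ha' : 0 < a + r*δ := by linarith
  have ht'le : t' ≤ t + (2*δ^2 + δ*s) := by
    have := abs_le.mp hclose
    linarith [this.1]
  have hdr : 0 < δ/r := div_pos hδ hr
  by_cases h12 : 1/2 ≤ a
  · -- a ≥ 1/2 : both in linear region
    have hL : ell t' (a + r*δ) = 2*(1-(a+r*δ))*t' := by
      unfold ell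
      rw [if_neg (by rintro ⟨_, h⟩; exact ha'.ne' h), if_pos (by linarith)]
    have hR : ell t a = 2*(1-a)*t := by
      unfold ell
      rw [if_neg (by rintro ⟨_, h⟩; linarith), if_pos h12]
    rw [hL, hR]
    have hc0 : (0:ℝ) ≤ 2*(1-(a+r*δ)) := by linarith
    have h1 := mul_le_mul_of_nonneg_left ht'le hc0
    have h1r := mul_le_mul_of_nonneg_right h1 hr.le
    have h2 : 2*(1-(a+r*δ))*(2*δ+s)*r ≤ s^2*r^2/4 + 1 := by
      nlinarith [sq_nonneg (2*(1-(a+r*δ)) - s*r/2),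
        mul_nonneg hc0 (by linarith : (0:ℝ) ≤ 2*a - 1)]
    have h2d := mul_le_mul_of_nonneg_left h2 hδ.le
    have hts : δ*(s^2*r^2/4) = 2*δ*r^2*t := by rw [hs2]; ring
    have key : (2*(1-(a+r*δ))*t' - 2*(1-a)*t) * r ≤ δ := by linarith [h1r, h2d, hts]
    have := (le_div_iff₀ hr).mpr key
    linarith
  · push_neg at h12
    by_cases hta : t ≤ a
    · -- region t ≤ a < 1/2
      refine le_trans (ell_le_div t' (a+r*δ) ht'0 ha') ?_
      by_cases haz : a = 0
      · have htz : t = 0 := le_antisymm (haz ▸ hta) ht0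
        have hsz : s = 0 := by rw [hs, htz]; simp
        have hR : ell t a = 0 := by unfold ell; rw [if_pos ⟨htz, haz⟩]
        rw [hR, haz, zero_add, zero_add]
        rw [div_le_div_iff₀ (by positivity) hr]
        nlinarith [ht'le]
      · have hapos : 0 < a := lt_of_le_of_ne ha0 (Ne.symm haz)
        have hR : ell t a = t/(2*a) := by
          unfold ell
          rw [if_neg (by rintro ⟨_, h⟩; exact haz h), if_neg (by linarith), if_pos hta]
        rw [hR, div_add_div _ _ (by positivity) hr.ne', div_le_div_iff₀ (by positivity) (by positivity)]
        -- t' * (2*a*r) ≤ (t*r + 2*a*δ) * (2*(a+r*δ))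
        have k1 := mul_le_mul_of_nonneg_right ht'le (by positivity : (0:ℝ) ≤ 2*a*r)
        have k2 : 2*(s*a*r) ≤ s^2*r^2/4 + 4*a^2 := by nlinarith [sq_nonneg (s*r - 4*a)]
        have k2d := mul_le_mul_of_nonneg_left k2 hδ.le
        have hts : δ*(s^2*r^2/4) = 2*δ*r^2*t := by rw [hs2]; ring
        linarith [k1, k2d, hts]
    · -- region a < t
      push_neg at hta
      have htpos : 0 < t := lt_of_le_of_lt ha0 hta
      have hR : ell t a = 1 - a/(2*t) := by
        unfold ell
        rw [if_neg (by rintro ⟨h, _⟩; exact htpos.ne' h), if_neg (by push_neg; linarith),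
          if_neg (by push_neg; exact hta)]
      rw [hR]
      have hRhalf : 1/2 ≤ 1 - a/(2*t) := by
        have : a/(2*t) ≤ 1/2 := by rw [div_le_iff₀ (by positivity)]; linarith
        linarith
      by_cases hLcase : a + r*δ < 1/2 ∧ a + r*δ < t'
      · obtain ⟨hL1, hL2⟩ := hLcase
        have ht'pos : 0 < t' := lt_trans ha' hL2
        have hL : ell t' (a + r*δ) = 1 - (a+r*δ)/(2*t') := by
          unfold ell
          rw [if_neg (by rintro ⟨h, _⟩; exact ht'pos.ne' h), if_neg (by push_neg; exact hL1),
            if_neg (by push_neg; exact hL2)]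
        rw [hL]
        have key : a/(2*t) ≤ (a+r*δ)/(2*t') + δ/r := by
          rw [div_add_div _ _ (by positivity) hr.ne', div_le_div_iff₀ (by positivity) (by positivity)]
          -- a * (2*t'*r) ≤ ((a+r*δ)*r + 2*t'*δ) * (2*t)
          rcases le_or_gt t' t with hc | hc
          · nlinarith [mul_nonneg (mul_nonneg ha0 hr.le) (by linarith : (0:ℝ) ≤ t - t'),
              mul_pos (mul_pos hr hrδ) htpos, mul_nonneg (mul_nonneg ht0 ht'0) hδ.le]
          · have hfact1 : 0 ≤ (t-a)*r*(t'-t) :=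
              mul_nonneg (mul_nonneg (by linarith) hr.le) (by linarith)
            rcases le_or_gt r (2*δ) with hc2 | hc2
            · linarith [hfact1, mul_pos (mul_pos htpos htpos) hδ,
                mul_nonneg (mul_nonneg (by linarith : (0:ℝ) ≤ 2*δ - r) ht0) (by linarith : (0:ℝ) ≤ t' - t),
                mul_nonneg (mul_nonneg ht0 (sq_nonneg r)) hδ.le]
            · have q1 : (t'-t) * (r - 2*δ) ≤ δ*(r^2 + s^2/4) := by
                have e1 := mul_le_mul_of_nonneg_right
                  (show t' - t ≤ 2*δ^2 + δ*s by linarith) (by linarith : (0:ℝ) ≤ r - 2*δ)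
                nlinarith [e1, sq_nonneg (r - s/2 - δ), mul_nonneg hδ.le hs0]
              have q1t := mul_le_mul_of_nonneg_left q1 (by linarith : (0:ℝ) ≤ 2*t)
              have hts : 2*t*(δ*(r^2 + s^2/4)) = 2*t*δ*r^2 + 4*t^2*δ := by
                have : t*s^2 = 8*t^2 := by rw [hs2]; ring
                nlinarith [this]
              linarith [hfact1, q1t, hts]
        linarith
      · have hLhalf : ell t' (a + r*δ) ≤ 1/2 := by
          unfold ell
          rw [if_neg (by rintro ⟨_, h⟩; exact ha'.ne' h)]
          split_ifs with h1 h2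
          · nlinarith [mul_nonneg (by linarith : (0:ℝ) ≤ 2*(a+r*δ) - 1) ht'0]
          · rw [div_le_iff₀ (by linarith)]
            linarith
          · push_neg at hLcase h1
            exact absurd (hLcase h1) h2
        linarith
end

section
/- Let a ∈ [0,1/2), t ∈ (0,1/2), δ > 0, r > 0 with t ≤ a and a + δr ≤ 1. Then t'/(2(a+δr)) − t/(2a) ≤ δ/r whenever 0 ≤ t' ≤ t + δ√(8t) + 2δ². -/
/-! The whole content is the AM–GM bound `δ√(8t) ≤ δr·(t/a) + (δ/r)·2a`: with it the numerator
`t + δ√(8t) + 2δ²` is at most `(a + δr)·(t/a + 2δ/r)`, and the factor `a + δr` cancels against the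
denominator. -/

lemma Real.sqrt_four_mul_mul_le_add {x y : ℝ} (hx : 0 ≤ x) (hy : 0 ≤ y) :
    √(4 * (x * y)) ≤ x + y :=
  Real.sqrt_le_iff.mpr ⟨by positivity, by nlinarith [sq_nonneg (x - y)]⟩

lemma Real.sqrt_eight_mul_le {a r t : ℝ} (ha : 0 < a) (hr : 0 < r) (ht : 0 ≤ t) :
    √(8 * t) ≤ r * (t / a) + 2 * a / r := by
  have hprod : 4 * (r * (t / a) * (2 * a / r)) = 8 * t := by
    field_simp
    ring
  simpa [hprod] using
    Real.sqrt_four_mul_mul_le_add (x := r * (t / a)) (y := 2 * a / r) (by positivity) (by positivity)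

theorem ell_perturbation_mid_case_general (a t t' δ r : ℝ)
    (ht : t ∈ Set.Ioo (0:ℝ) (1/2))
    (hδ : 0 < δ) (hr : 0 < r) (hta : t ≤ a)
    (ht' : t' ≤ t + δ*Real.sqrt (8*t) + 2*δ^2) :
    t'/(2*(a + δ*r)) - t/(2*a) ≤ δ/r := by
  have ha : 0 < a := ht.1.trans_le hta
  have hden : 0 < 2 * (a + δ * r) := by positivity
  have hnum : t' ≤ 2 * (a + δ * r) * (t / (2 * a) + δ / r) := calc
    t' ≤ t + δ * (r * (t / a) + 2 * a / r) + 2 * δ ^ 2 := ht'.trans (by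
      gcongr
      exact Real.sqrt_eight_mul_le ha hr ht.1.le)
    _ = 2 * (a + δ * r) * (t / (2 * a) + δ / r) := by
      field_simp
      ring
  rw [sub_le_iff_le_add, div_le_iff₀ hden]
  linarith

theorem ell_perturbation_mid_case (a t t' δ r : ℝ)
    (ha : a ∈ Set.Ico (0:ℝ) (1/2)) (ht : t ∈ Set.Ioo (0:ℝ) (1/2))
    (hδ : 0 < δ) (hr : 0 < r) (hta : t ≤ a) (har : a + δ*r ≤ 1)
    (ht'0 : 0 ≤ t') (ht' : t' ≤ t + δ*Real.sqrt (8*t) + 2*δ^2) :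
    t'/(2*(a + δ*r)) - t/(2*a) ≤ δ/r :=
  ell_perturbation_mid_case_general a t t' δ r ht hδ hr hta ht'
end
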